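/- arXiv:2605.12195 — 2 statements merged into one kernel-verified Lean document; each statement's English description precedes it below -/
import Mathlib

section
/- Let (X₁,Y₁),…,(X_{N+1},Y_{N+1}) be exchangeable random variables taking values in 𝒳 × 𝒴, let G ⊆ 𝒳 be a fixed measurable set with P(X_{N+1} ∈ G) > 0, let V : 𝒳 × 𝒴 → ℝ be a measurable score function, and let α ∈ (0,1). Define the group calibration indices I = {i ≤ N : X_i ∈ G} with n = |I|, let η̂_G be the ⌈(1−α)(n+1)⌉-th smallest value among {V(X_i,Y_i) : i ∈ I} (with η̂_G = +∞ if ⌈(1−α)(n+1)⌉ > n), and let C_G(X_{N+1}) = {y : V(X_{N+1}, y) ≤ η̂_G}. Then P(Y_{N+1} ∈ C_G(X_{N+1}) | X_{N+1} ∈ G) ≥ 1 − α. -/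
/-!
Swapping the test point with the `j`-th point leaves the law of the sample unchanged, so the
probability of miscoverage equals its average over the `N + 1` swaps. For a fixed sample with
`m` points in `G`, the `j`-th swap miscovers exactly when the `j`-th point lies in `G` and its
score exceeds at least `⌈(1 - α) m⌉` of the scores in `G`. At most `m - ⌈(1 - α) m⌉ ≤ α m` points
do so, while `m` of the swaps put the test point in `G`. Hence
`P(miscoverage, X_{N+1} ∈ G) ≤ α P(X_{N+1} ∈ G)`.
-/

open MeasureTheory
open scoped ENNReal

/-- The `k`-th smallest value (1-indexed) of a finite multiset of reals
(`0` if the index is out of range). -/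
noncomputable def kthSmallestM (s : Multiset ℝ) (k : ℕ) : ℝ :=
  (s.sort (· ≤ ·)).getD (k - 1) 0

/-- The indices `i ≤ N` of calibration points falling in the group `G`. -/
noncomputable def calIdx {Ω 𝒳 𝒴 : Type*} (N : ℕ) (Z : Fin (N + 1) → Ω → 𝒳 × 𝒴)
    (G : Set 𝒳) (ω : Ω) : Finset (Fin N) :=
  @Finset.filter (Fin N) (fun i => (Z i.castSucc ω).1 ∈ G)
    (Classical.decPred _) Finset.univ

/-- The group-calibrated conformal threshold `η̂_G`: the `⌈(1−α)(n+1)⌉`-th smallest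
score among the calibration points in `G` (where `n` is their number), and `+∞` if
`⌈(1−α)(n+1)⌉ > n`. -/
noncomputable def groupThreshold {Ω 𝒳 𝒴 : Type*} (N : ℕ) (Z : Fin (N + 1) → Ω → 𝒳 × 𝒴)
    (G : Set 𝒳) (V : 𝒳 × 𝒴 → ℝ) (α : ℝ) (ω : Ω) : EReal :=
  if ⌈(1 - α) * ((calIdx N Z G ω).card + 1)⌉₊ ≤ (calIdx N Z G ω).card then
    ((kthSmallestM ((calIdx N Z G ω).val.map fun i => V (Z i.castSucc ω))
        ⌈(1 - α) * ((calIdx N Z G ω).card + 1)⌉₊ : ℝ) : EReal)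
  else ⊤

open Finset

theorem List.Pairwise.getElem_lt_iff_lt_countP {α : Type*} [LinearOrder α] {l : List α}
    (hl : l.Pairwise (· ≤ ·)) {i : ℕ} (hi : i < l.length) (x : α) :
    l[i] < x ↔ i < l.countP (· < x) := by
  induction l generalizing i with
  | nil => simp at hi
  | cons a t ih =>
    rw [List.pairwise_cons] at hl
    have htail : ¬ a < x → t.countP (· < x) = 0 := fun ha =>
      List.countP_eq_zero.2 fun b hb hbx => ha ((hl.1 b hb).trans_lt (by simpa using hbx))
    rcases i with _ | i
    · by_cases ha : a < x <;> simp [ha, htail]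
    · rw [List.getElem_cons_succ, ih hl.2 (by simpa using hi), List.countP_cons]
      by_cases ha : a < x <;> simp [ha, htail]

theorem kthSmallestM_lt_iff {s : Multiset ℝ} {k : ℕ} (hk : 1 ≤ k) (hks : k ≤ Multiset.card s)
    (x : ℝ) : kthSmallestM s k < x ↔ k ≤ s.countP (· < x) := by
  have hlen : k - 1 < (s.sort (· ≤ ·)).length := by rw [Multiset.length_sort]; omega
  rw [kthSmallestM, List.getD_eq_getElem _ _ hlen,
    (Multiset.pairwise_sort s _).getElem_lt_iff_lt_countP hlen, ← Multiset.coe_countP,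
    Multiset.sort_eq]
  omega

theorem coe_le_groupThreshold_iff {Ω 𝒳 𝒴 : Type*} {N : ℕ} {Z : Fin (N + 1) → Ω → 𝒳 × 𝒴}
    {G : Set 𝒳} {V : 𝒳 × 𝒴 → ℝ} {α : ℝ} (hα : α < 1) (ω : Ω) (v : ℝ) :
    (v : EReal) ≤ groupThreshold N Z G V α ω ↔
      #{i ∈ calIdx N Z G ω | V (Z i.castSucc ω) < v} <
        ⌈(1 - α) * (#(calIdx N Z G ω) + 1)⌉₊ := by
  have hk : 1 ≤ ⌈(1 - α) * (#(calIdx N Z G ω) + 1)⌉₊ :=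
    Nat.one_le_iff_ne_zero.2 (Nat.ceil_pos.2 (by have := sub_pos.2 hα; positivity)).ne'
  unfold groupThreshold
  split_ifs with hkI
  · rw [EReal.coe_le_coe_iff, ← not_lt, kthSmallestM_lt_iff hk (by simpa using hkI),
      Multiset.countP_map, not_le]
    rfl
  · simp only [le_top, true_iff]
    exact (card_filter_le _ _).trans_lt (not_le.1 hkI)

theorem card_filter_le_card_filter_lt_le_sub {ι α : Type*} [LinearOrder α] (s : Finset ι)
    (f : ι → α) (k : ℕ) : #{j ∈ s | k ≤ #{l ∈ s | f l < f j}} ≤ #s - k := by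
  classical
  set B := {j ∈ s | k ≤ #{l ∈ s | f l < f j}}
  rcases B.eq_empty_or_nonempty with hB | hB
  · simp [hB]
  -- the elements below a lowest element of `B` lie outside `B`
  obtain ⟨j₀, hj₀B, hj₀⟩ := B.exists_min_image f hB
  have hdisj : Disjoint B {l ∈ s | f l < f j₀} :=
    disjoint_filter.2 fun l _ hl hlt => (hj₀ l (mem_filter.2 ⟨‹_›, hl⟩)).not_gt hlt
  have hsub : B ∪ {l ∈ s | f l < f j₀} ⊆ s := union_subset (filter_subset _ _) (filter_subset _ _)
  have hcard := card_le_card hsub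
  rw [card_union_of_disjoint hdisj] at hcard
  have hk := (mem_filter.1 hj₀B).2
  omega

theorem card_filter_comp_perm {ι : Type*} [Fintype ι] {p : ι → Prop} [DecidablePred p]
    (σ : Equiv.Perm ι) :
    #{l | p (σ l)} = #{l | p l} := by
  simp only [card_filter]
  exact Equiv.sum_comp σ fun l => if p l then 1 else 0

theorem measurable_card_filter {ι X : Type*} [Fintype ι] [MeasurableSpace X] {p : ι → X → Prop}
    [∀ l x, Decidable (p l x)] (hp : ∀ l, MeasurableSet {x | p l x}) :
    Measurable fun x => #{l | p l x} := by
  simp only [card_filter]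
  exact Finset.measurable_sum _ fun l _ => Measurable.ite (hp l) measurable_const measurable_const

theorem measure_le_mul_of_sum_indicator_le {X ι : Type*} [MeasurableSpace X] [Fintype ι]
    [Nonempty ι] {ν : Measure X} {g : ι → X → X} (hg : ∀ j, MeasurePreserving (g j) ν ν)
    {E A : Set X} (hE : MeasurableSet E) (hA : MeasurableSet A) {c : ℝ≥0∞}
    (h : ∀ x, ∑ j, E.indicator 1 (g j x) ≤ c * ∑ j, A.indicator 1 (g j x)) :
    ν E ≤ c * ν A := by
  have hsum : ∀ {S : Set X}, MeasurableSet S →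
      ∫⁻ x, ∑ j, S.indicator 1 (g j x) ∂ν = Fintype.card ι * ν S := by
    intro S hS
    rw [lintegral_finsetSum (f := fun j x => S.indicator 1 (g j x)) _
      fun j _ => (measurable_one.indicator hS).comp (hg j).measurable]
    simp only [fun j => (hg j).lintegral_comp (measurable_one.indicator hS),
      lintegral_indicator_one hS, sum_const, card_univ, nsmul_eq_mul]
  have hmono := lintegral_mono (μ := ν) h
  rw [lintegral_const_mul _ (Finset.measurable_sum (f := fun j x => A.indicator 1 (g j x)) _
    fun j _ => (measurable_one.indicator hA).comp (hg j).measurable), hsum hE, hsum hA,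
    mul_left_comm] at hmono
  exact (ENNReal.mul_le_mul_iff_right (by simp) (by simp)).1 hmono

open ProbabilityTheory in
theorem ofReal_one_sub_le_cond {Ω : Type*} [MeasurableSpace Ω] {μ : Measure Ω} [IsFiniteMeasure μ]
    {s t : Set Ω} (hs : MeasurableSet s) (hs₀ : μ s ≠ 0) {α : ℝ} (hα : 0 ≤ α)
    (h : μ (s \ t) ≤ ENNReal.ofReal α * μ s) :
    ENNReal.ofReal (1 - α) ≤ μ[t|s] := by
  have := cond_isProbabilityMeasure (μ := μ) hs₀
  have hcompl : μ[tᶜ|s] ≤ ENNReal.ofReal α := by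
    rw [cond_apply hs, ← Set.sdiff_eq]
    calc (μ s)⁻¹ * μ (s \ t) ≤ (μ s)⁻¹ * (ENNReal.ofReal α * μ s) := by gcongr
      _ = ENNReal.ofReal α := by
        rw [mul_left_comm, ENNReal.inv_mul_cancel hs₀ (measure_ne_top μ s), mul_one]
  have hone : 1 ≤ μ[t|s] + μ[tᶜ|s] := by
    rw [← measure_univ (μ := μ[|s]), ← Set.union_compl_self t]
    exact measure_union_le t tᶜ
  rw [ENNReal.ofReal_sub _ hα, ENNReal.ofReal_one, tsub_le_iff_right]
  exact hone.trans (by gcongr)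

section Ranks

variable {ι 𝒳 𝒴 : Type*} [Fintype ι] (G : Set 𝒳) (V : 𝒳 × 𝒴 → ℝ)

open Classical in
noncomputable def groupIdx (z : ι → 𝒳 × 𝒴) : Finset ι :=
  {l | (z l).1 ∈ G}

noncomputable def groupRank (z : ι → 𝒳 × 𝒴) (j : ι) : ℕ :=
  #{l ∈ groupIdx G z | V (z l) < V (z j)}

theorem card_groupIdx_comp_perm (z : ι → 𝒳 × 𝒴) (σ : Equiv.Perm ι) :
    #(groupIdx G (z ∘ σ)) = #(groupIdx G z) := by
  classical
  exact card_filter_comp_perm (p := fun l => (z l).1 ∈ G) σ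

theorem groupRank_comp_perm (z : ι → 𝒳 × 𝒴) (σ : Equiv.Perm ι) (j : ι) :
    groupRank G V (z ∘ σ) j = groupRank G V z (σ j) := by
  classical
  simp only [groupRank, groupIdx, filter_filter]
  exact card_filter_comp_perm (p := fun l => (z l).1 ∈ G ∧ V (z l) < V (z (σ j))) σ

end Ranks

section Miscoverage
variable {𝒳 𝒴 : Type*} (N : ℕ) (G : Set 𝒳) (V : 𝒳 × 𝒴 → ℝ) (α : ℝ)

-- `groupIdx` also contains the test point, so `#(groupIdx G z)` is the paper's `n + 1`.
def miscoverageEvent : Set (Fin (N + 1) → 𝒳 × 𝒴) :=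
  {z | (z (Fin.last N)).1 ∈ G ∧ ⌈(1 - α) * #(groupIdx G z)⌉₊ ≤ groupRank G V z (Fin.last N)}

variable {N G V α}

theorem measurableSet_miscoverageEvent [MeasurableSpace 𝒳] [MeasurableSpace 𝒴]
    (hG : MeasurableSet G) (hV : Measurable V) :
    MeasurableSet (miscoverageEvent N G V α) := by
  classical
  have hmem : ∀ l, Measurable fun z : Fin (N + 1) → 𝒳 × 𝒴 => z l := measurable_pi_apply
  have hcount : Measurable fun z : Fin (N + 1) → 𝒳 × 𝒴 => #(groupIdx G z) :=
    measurable_card_filter fun l => (hmem l).fst hG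
  have hrank : Measurable fun z : Fin (N + 1) → 𝒳 × 𝒴 => groupRank G V z (Fin.last N) := by
    simp only [groupRank, groupIdx, filter_filter]
    exact measurable_card_filter fun l => ((hmem l).fst hG).inter
      (measurableSet_lt (hV.comp (hmem l)) (hV.comp (hmem _)))
  exact ((hmem _).fst hG).inter
    (measurableSet_le ((measurable_from_nat (f := fun n : ℕ => ⌈(1 - α) * n⌉₊)).comp hcount) hrank)

theorem groupIdx_eq_cons_map_calIdx {Ω : Type*} (Z : Fin (N + 1) → Ω → 𝒳 × 𝒴) {ω : Ω}
    (hω : (Z (Fin.last N) ω).1 ∈ G) :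
    groupIdx G (fun i => Z i ω) =
      cons (Fin.last N) ((calIdx N Z G ω).map Fin.castSuccEmb) (by simp) := by
  ext l
  induction l using Fin.lastCases <;> simp [groupIdx, calIdx, hω]

theorem mem_miscoverageEvent_of_not_le_groupThreshold {Ω : Type*}
    {Z : Fin (N + 1) → Ω → 𝒳 × 𝒴} (hα : α < 1) {ω : Ω} (hω : (Z (Fin.last N) ω).1 ∈ G)
    (h : ¬ (V (Z (Fin.last N) ω) : EReal) ≤ groupThreshold N Z G V α ω) :
    (fun i => Z i ω) ∈ miscoverageEvent N G V α := by
  rw [coe_le_groupThreshold_iff hα, not_lt] at h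
  refine ⟨hω, ?_⟩
  rw [groupRank, groupIdx_eq_cons_map_calIdx Z hω, filter_cons, if_neg (lt_irrefl _),
    filter_map, card_map, card_cons, card_map]
  exact_mod_cast h

theorem sum_indicator_miscoverageEvent_comp_swap_le (hα : 0 ≤ α) (z : Fin (N + 1) → 𝒳 × 𝒴) :
    ∑ j, (miscoverageEvent N G V α).indicator 1 (z ∘ Equiv.swap j (Fin.last N)) ≤
      ENNReal.ofReal α *
        ∑ j, {z : Fin (N + 1) → 𝒳 × 𝒴 | (z (Fin.last N)).1 ∈ G}.indicator 1
          (z ∘ Equiv.swap j (Fin.last N)) := by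
  classical
  set m := #(groupIdx G z)
  set k := ⌈(1 - α) * m⌉₊
  have hswap : ∀ j, (z ∘ Equiv.swap j (Fin.last N)) (Fin.last N) = z j := fun j => by simp
  have hE : ∑ j, (miscoverageEvent N G V α).indicator 1 (z ∘ Equiv.swap j (Fin.last N)) =
      (#{j ∈ groupIdx G z | k ≤ groupRank G V z j} : ℝ≥0∞) := by
    simp only [Set.indicator_apply, Pi.one_apply, sum_boole, miscoverageEvent, Set.mem_ofPred_eq,
      card_groupIdx_comp_perm, groupRank_comp_perm, hswap, Equiv.swap_apply_right]
    simp only [groupIdx, filter_filter]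
    rfl
  have hA : ∑ j, {z : Fin (N + 1) → 𝒳 × 𝒴 | (z (Fin.last N)).1 ∈ G}.indicator 1
      (z ∘ Equiv.swap j (Fin.last N)) = (m : ℝ≥0∞) := by
    simp only [Set.indicator_apply, Pi.one_apply, sum_boole, Set.mem_ofPred_eq, hswap]
    rfl
  have hmk : ((m - k : ℕ) : ℝ) ≤ α * m := by
    rcases le_total k m with hkm | hmk
    · rw [Nat.cast_sub hkm]
      linarith [Nat.le_ceil ((1 - α) * m)]
    · rw [Nat.sub_eq_zero_of_le hmk, Nat.cast_zero]
      positivity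
  calc ∑ j, (miscoverageEvent N G V α).indicator 1 (z ∘ Equiv.swap j (Fin.last N))
      ≤ ((m - k : ℕ) : ℝ≥0∞) := by
        rw [hE]
        exact_mod_cast card_filter_le_card_filter_lt_le_sub (groupIdx G z) (fun l => V (z l)) k
    _ ≤ ENNReal.ofReal α * m := by
        rw [← ENNReal.ofReal_natCast, ← ENNReal.ofReal_natCast m, ← ENNReal.ofReal_mul hα]
        exact ENNReal.ofReal_le_ofReal hmk
    _ = _ := by rw [hA]

end Miscoverage

/-- Group-conditional (equalized) coverage of split conformal prediction calibrated on a
group `G`: if `(X₁,Y₁),…,(X_{N+1},Y_{N+1})` are exchangeable, `G` is measurable with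
`P(X_{N+1} ∈ G) > 0`, and `C_G(X_{N+1}) = {y : V(X_{N+1}, y) ≤ η̂_G}`, then
`P(Y_{N+1} ∈ C_G(X_{N+1}) | X_{N+1} ∈ G) ≥ 1 − α`. -/
theorem stmt4 {Ω 𝒳 𝒴 : Type*} [MeasurableSpace Ω] [MeasurableSpace 𝒳] [MeasurableSpace 𝒴]
    (μ : Measure Ω) [IsProbabilityMeasure μ] (N : ℕ)
    (Z : Fin (N + 1) → Ω → 𝒳 × 𝒴) (hZmeas : ∀ i, Measurable (Z i))
    (hZexch : ∀ σ : Equiv.Perm (Fin (N + 1)),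
      μ.map (fun ω => fun i => Z (σ i) ω) = μ.map (fun ω => fun i => Z i ω))
    (G : Set 𝒳) (hG : MeasurableSet G)
    (hpos : 0 < μ {ω | (Z (Fin.last N) ω).1 ∈ G})
    (V : 𝒳 × 𝒴 → ℝ) (hV : Measurable V)
    (α : ℝ) (hα : α ∈ Set.Ioo (0 : ℝ) 1) :
    ENNReal.ofReal (1 - α) ≤
      (ProbabilityTheory.cond μ {ω | (Z (Fin.last N) ω).1 ∈ G})
        {ω | (Z (Fin.last N) ω).2 ∈
          {y : 𝒴 | ((V ((Z (Fin.last N) ω).1, y) : ℝ) : EReal) ≤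
              groupThreshold N Z G V α ω}} := by
  set T : Ω → Fin (N + 1) → 𝒳 × 𝒴 := fun ω i => Z i ω
  have hT : Measurable T := measurable_pi_lambda _ hZmeas
  have hA : MeasurableSet {z : Fin (N + 1) → 𝒳 × 𝒴 | (z (Fin.last N)).1 ∈ G} :=
    (measurable_pi_apply _).fst hG
  have hswap : ∀ j : Fin (N + 1), MeasurePreserving (· ∘ Equiv.swap j (Fin.last N))
      (μ.map T) (μ.map T) := by
    intro j
    have hσ : Measurable fun z : Fin (N + 1) → 𝒳 × 𝒴 => z ∘ Equiv.swap j (Fin.last N) :=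
      measurable_pi_lambda _ fun i => measurable_pi_apply _
    exact ⟨hσ, by rw [Measure.map_map hσ hT]; exact hZexch _⟩
  have hmis := measure_le_mul_of_sum_indicator_le hswap
    (measurableSet_miscoverageEvent hG hV) hA
    (sum_indicator_miscoverageEvent_comp_swap_le hα.1.le)
  rw [Measure.map_apply hT (measurableSet_miscoverageEvent hG hV), Measure.map_apply hT hA] at hmis
  refine ofReal_one_sub_le_cond (hT hA) hpos.ne' hα.1.le (le_trans (measure_mono ?_) hmis)
  rintro ω ⟨hω, hcov⟩
  exact mem_miscoverageEvent_of_not_le_groupThreshold hα.2 hω hcov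
end

section
/- Let N ≥ 1, let u ∈ [0,1]^N with Σ_{i=1}^N u_i < δ ≤ N, and suppose ω ≥ 0 satisfies Σ_{i=1}^N min(1, u_i + ω/2) = δ. Define v* ∈ ℝ^N by v*_i = min(1, u_i + ω/2). Then v* is a minimizer of the objective Σ_{i=1}^N (v_i − u_i)² over the feasible set {v ∈ ℝ^N : Σ_{i=1}^N v_i ≥ δ and 0 ≤ v_i ≤ 1 for all i}. -/
/-- Closed form of the ℓ₂ projection onto `{v ∈ [0,1]^N : ∑ v_i ≥ δ}` (Eq. 4 / Appendix A.3):
if `u ∈ [0,1]^N` with `∑ u_i < δ ≤ N` and `ω ≥ 0` satisfies `∑ min(1, u_i + ω/2) = δ`,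
then `v*_i = min(1, u_i + ω/2)` minimizes `∑ (v_i − u_i)²` over the feasible set. -/
theorem stmt10 (N : ℕ) (hN : 1 ≤ N) (u : Fin N → ℝ) (hu : ∀ i, u i ∈ Set.Icc (0 : ℝ) 1)
    (δ : ℝ) (hδ₁ : ∑ i, u i < δ) (hδ₂ : δ ≤ (N : ℝ))
    (ω : ℝ) (hω : 0 ≤ ω) (hsum : ∑ i, min 1 (u i + ω / 2) = δ) :
    (fun i => min 1 (u i + ω / 2)) ∈
        {v : Fin N → ℝ | δ ≤ ∑ i, v i ∧ ∀ i, v i ∈ Set.Icc (0 : ℝ) 1} ∧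
    ∀ v ∈ {v : Fin N → ℝ | δ ≤ ∑ i, v i ∧ ∀ i, v i ∈ Set.Icc (0 : ℝ) 1},
      ∑ i, (min 1 (u i + ω / 2) - u i) ^ 2 ≤ ∑ i, (v i - u i) ^ 2 := by
  constructor
  · refine ⟨hsum.ge, fun i => ?_⟩
    have h := hu i
    constructor
    · exact le_min (by linarith [h.1, h.2]) (by linarith [h.1])
    · exact min_le_left _ _
  · intro v hv
    obtain ⟨hvs, hvb⟩ := hv
    have key : ∀ i, (min 1 (u i + ω / 2) - u i) ^ 2 + ω * (v i - min 1 (u i + ω / 2))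
        ≤ (v i - u i) ^ 2 := by
      intro i
      have hb := hvb i
      have hui := hu i
      rcases le_total (u i + ω / 2) 1 with h | h
      · rw [min_eq_right h]; nlinarith [sq_nonneg (v i - u i - ω / 2)]
      · rw [min_eq_left h]; nlinarith [hb.2, hui.1]
    have hsum2 := Finset.sum_le_sum (s := Finset.univ) (fun i _ => key i)
    rw [Finset.sum_add_distrib, ← Finset.mul_sum, Finset.sum_sub_distrib, hsum] at hsum2
    nlinarith [mul_nonneg hω (by linarith : (0:ℝ) ≤ ∑ i, v i - δ)]
end
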